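/- Let p ∈ (1,2), γ_p = 2/(2−p), λ₊ > 0, and define T(M) = 2∫₀¹ dt / sqrt(γ_p²(1 − t²) + (2λ₊/(p M^{2−p}))(1 − t^p)) for M > 0. Then T is continuous and strictly increasing on (0, ∞), lim_{M→0⁺} T(M) = 0, and lim_{M→+∞} T(M) = π/γ_p. In particular T(M) ∈ (0, π/γ_p) for every M > 0. -/

import Mathlib

open Real Filter Topology Set MeasureTheory
open scoped Interval

/-!
Write `c = 2λ₊ / (p M^(2-p))`, so that `T(M) = 2 ∫₀¹ dt / √(γ²(1 - t²) + c (1 - t^p))`.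
Since `2 - p > 0`, `c` decreases strictly from `+∞` to `0` as `M` runs over `(0, ∞)`, while the
integrand decreases strictly in `c`; hence `T` is strictly increasing. Every integrand is
dominated by the integrable function `γ⁻¹ (1 - t)^(-1/2)`, so dominated convergence gives
continuity and both limits: as `c → ∞` the integrand tends to `0` pointwise, and at `c = 0` the
integral is `∫₀¹ dt / (γ √(1 - t²)) = π / (2γ)`.
-/

noncomputable def timeMapIntegrand (γ p c t : ℝ) : ℝ :=
  1 / √(γ ^ 2 * (1 - t ^ 2) + c * (1 - t ^ p))

noncomputable def timeMapIntegral (γ p c : ℝ) : ℝ :=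
  ∫ t in (0 : ℝ)..1, timeMapIntegrand γ p c t

lemma intervalIntegrable_one_sub_rpow_neg_half :
    IntervalIntegrable (fun t : ℝ => (1 - t) ^ (-(1 / 2) : ℝ)) volume 0 1 := by
  simpa using (intervalIntegral.intervalIntegrable_rpow' (a := 1) (b := 0)
    (r := -(1 / 2)) (by norm_num)).comp_sub_left 1

namespace timeMapIntegrand

variable {γ p c t : ℝ}

lemma measurable (γ p c : ℝ) : Measurable (timeMapIntegrand γ p c) := by
  unfold timeMapIntegrand
  fun_prop

lemma nonneg : 0 ≤ timeMapIntegrand γ p c t := by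
  unfold timeMapIntegrand
  positivity

lemma sq_mul_one_sub_le_radicand (hp : 0 < p) (hc : 0 ≤ c) (ht₀ : 0 ≤ t) (ht₁ : t ≤ 1) :
    γ ^ 2 * (1 - t) ≤ γ ^ 2 * (1 - t ^ 2) + c * (1 - t ^ p) := by
  have hsq : t ^ 2 ≤ t := by nlinarith
  have hpow : t ^ p ≤ 1 := rpow_le_one ht₀ ht₁ hp.le
  nlinarith [sq_nonneg γ]

lemma radicand_pos (hγ : 0 < γ) (hp : 0 < p) (hc : 0 ≤ c) (ht : t ∈ Ico (0 : ℝ) 1) :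
    0 < γ ^ 2 * (1 - t ^ 2) + c * (1 - t ^ p) :=
  (mul_pos (pow_pos hγ 2) (sub_pos.2 ht.2)).trans_le
    (sq_mul_one_sub_le_radicand hp hc ht.1 ht.2.le)

lemma norm_le (hγ : 0 < γ) (hp : 0 < p) (hc : 0 ≤ c) (ht : t ∈ Ι (0 : ℝ) 1) :
    ‖timeMapIntegrand γ p c t‖ ≤ γ⁻¹ * (1 - t) ^ (-(1 / 2) : ℝ) := by
  rw [uIoc_of_le zero_le_one] at ht
  rw [norm_of_nonneg nonneg]
  rcases ht.2.eq_or_lt with rfl | ht₁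
  · -- both sides are junk zeros: `1 / √0 = 0` and `0 ^ (-1/2) = 0`
    simp [timeMapIntegrand]
  have hlt : 0 < 1 - t := sub_pos.2 ht₁
  calc timeMapIntegrand γ p c t ≤ 1 / √(γ ^ 2 * (1 - t)) :=
        one_div_le_one_div_of_le (sqrt_pos.2 (by positivity))
          (sqrt_le_sqrt (sq_mul_one_sub_le_radicand hp hc ht.1.le ht.2))
    _ = γ⁻¹ * (1 - t) ^ (-(1 / 2) : ℝ) := by
        rw [sqrt_mul (sq_nonneg γ), sqrt_sq hγ.le, rpow_neg hlt.le, ← sqrt_eq_rpow, one_div,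
          mul_inv]

lemma intervalIntegrable (hγ : 0 < γ) (hp : 0 < p) (hc : 0 ≤ c) :
    IntervalIntegrable (timeMapIntegrand γ p c) volume 0 1 :=
  (intervalIntegrable_one_sub_rpow_neg_half.const_mul γ⁻¹).mono_fun
    (measurable γ p c).aestronglyMeasurable <|
    (ae_restrict_iff' measurableSet_uIoc).2 <| ae_of_all _ fun _ ht =>
      (norm_le hγ hp hc ht).trans (le_norm_self _)

lemma lt_of_param_lt (hγ : 0 < γ) (hp : 0 < p) {c₁ c₂ : ℝ} (hc₁ : 0 ≤ c₁) (hlt : c₁ < c₂)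
    (ht : t ∈ Ioo (0 : ℝ) 1) : timeMapIntegrand γ p c₂ t < timeMapIntegrand γ p c₁ t := by
  have hpow : 0 < 1 - t ^ p := sub_pos.2 (rpow_lt_one ht.1.le ht.2 hp)
  have hrad := radicand_pos hγ hp hc₁ (Ioo_subset_Ico_self ht)
  exact one_div_lt_one_div_of_lt (sqrt_pos.2 hrad) (sqrt_lt_sqrt hrad.le (by gcongr))

lemma continuousOn_param (hγ : 0 < γ) (hp : 0 < p) (ht : t ∈ Ico (0 : ℝ) 1) :
    ContinuousOn (fun c => timeMapIntegrand γ p c t) (Ici 0) :=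
  continuousOn_const.div (by fun_prop) fun _ hc => (sqrt_pos.2 (radicand_pos hγ hp hc ht)).ne'

lemma tendsto_param_atTop (hp : 0 < p) (ht : t ∈ Ioo (0 : ℝ) 1) :
    Tendsto (fun c => timeMapIntegrand γ p c t) atTop (𝓝 0) := by
  have hpow : 0 < 1 - t ^ p := sub_pos.2 (rpow_lt_one ht.1.le ht.2 hp)
  have hrad : Tendsto (fun c => γ ^ 2 * (1 - t ^ 2) + c * (1 - t ^ p)) atTop atTop :=
    tendsto_atTop_add_const_left _ _ (tendsto_id.atTop_mul_const hpow)
  simpa [timeMapIntegrand, Function.comp_def] using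
    tendsto_inv_atTop_zero.comp (tendsto_sqrt_atTop.comp hrad)

end timeMapIntegrand

namespace timeMapIntegral

variable {γ p c : ℝ}

open timeMapIntegrand

lemma pos (hγ : 0 < γ) (hp : 0 < p) (hc : 0 ≤ c) : 0 < timeMapIntegral γ p c :=
  intervalIntegral.intervalIntegral_pos_of_pos_on (intervalIntegrable hγ hp hc)
    (fun _ ht => one_div_pos.2 (sqrt_pos.2 (radicand_pos hγ hp hc (Ioo_subset_Ico_self ht))))
    one_pos

lemma strictAntiOn (hγ : 0 < γ) (hp : 0 < p) : StrictAntiOn (timeMapIntegral γ p) (Ici 0) := by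
  intro c₁ hc₁ c₂ hc₂ hlt
  have hI₁ := intervalIntegrable hγ hp (c := c₁) hc₁
  have hI₂ := intervalIntegrable hγ hp (c := c₂) hc₂
  have hdiff : 0 < ∫ t in (0 : ℝ)..1, (timeMapIntegrand γ p c₁ t - timeMapIntegrand γ p c₂ t) :=
    intervalIntegral.intervalIntegral_pos_of_pos_on (hI₁.sub hI₂)
      (fun _ ht => sub_pos.2 (lt_of_param_lt hγ hp hc₁ hlt ht)) one_pos
  rw [intervalIntegral.integral_sub hI₁ hI₂] at hdiff
  exact sub_pos.1 hdiff

lemma apply_zero (hγ : 0 < γ) (hp : 0 < p) : timeMapIntegral γ p 0 = π / (2 * γ) := by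
  have hderiv : ∀ t ∈ Ioo (0 : ℝ) 1,
      HasDerivAt (fun t => arcsin t / γ) (timeMapIntegrand γ p 0 t) t := by
    intro t ht
    have h := (hasDerivAt_arcsin (by linarith [ht.1]) ht.2.ne).div_const γ
    rwa [show 1 / √(1 - t ^ 2) / γ = timeMapIntegrand γ p 0 t by
      rw [timeMapIntegrand, zero_mul, add_zero, sqrt_mul (sq_nonneg γ), sqrt_sq hγ.le]
      field_simp] at h
  rw [timeMapIntegral, intervalIntegral.integral_eq_sub_of_hasDerivAt_of_le zero_le_one
    (continuous_arcsin.div_const γ).continuousOn hderiv (intervalIntegrable hγ hp le_rfl),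
    arcsin_one, arcsin_zero]
  field_simp
  ring

lemma continuousOn (hγ : 0 < γ) (hp : 0 < p) : ContinuousOn (timeMapIntegral γ p) (Ici 0) :=
  fun _ hc₀ => intervalIntegral.continuousWithinAt_of_dominated_interval
    (Eventually.of_forall fun c => (measurable γ p c).aestronglyMeasurable)
    (eventually_nhdsWithin_of_forall fun _ hc => ae_of_all _ fun _ => norm_le hγ hp hc)
    (intervalIntegrable_one_sub_rpow_neg_half.const_mul γ⁻¹) <|
    (Measure.ae_ne volume 1).mono fun t ht₁ ht => by
      rw [uIoc_of_le zero_le_one] at ht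
      exact continuousOn_param hγ hp ⟨ht.1.le, ht.2.lt_of_ne ht₁⟩ _ hc₀

lemma tendsto_atTop (hγ : 0 < γ) (hp : 0 < p) :
    Tendsto (timeMapIntegral γ p) atTop (𝓝 0) := by
  have h := intervalIntegral.tendsto_integral_filter_of_dominated_convergence _
    (Eventually.of_forall fun c => (measurable γ p c).aestronglyMeasurable)
    ((eventually_ge_atTop 0).mono fun _ hc => ae_of_all _ fun _ => norm_le hγ hp hc)
    (intervalIntegrable_one_sub_rpow_neg_half.const_mul γ⁻¹) <|
    (Measure.ae_ne volume 1).mono fun t ht₁ ht => by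
      rw [uIoc_of_le zero_le_one] at ht
      exact tendsto_param_atTop hp ⟨ht.1, ht.2.lt_of_ne ht₁⟩
  rwa [intervalIntegral.integral_zero] at h

end timeMapIntegral
section PowerCoefficient

variable {a b r : ℝ}

lemma continuousOn_div_mul_rpow (hb : 0 < b) :
    ContinuousOn (fun M : ℝ => a / (b * M ^ r)) (Ioi 0) :=
  continuousOn_const.div (continuousOn_const.mul (continuousOn_id.rpow_const fun _ hM =>
    Or.inl (ne_of_gt hM))) fun _ hM => (mul_pos hb (rpow_pos_of_pos hM r)).ne'

lemma strictAntiOn_div_mul_rpow (ha : 0 < a) (hb : 0 < b) (hr : 0 < r) :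
    StrictAntiOn (fun M : ℝ => a / (b * M ^ r)) (Ioi 0) := fun _ hM₁ _ _ hlt =>
  div_lt_div_of_pos_left ha (mul_pos hb (rpow_pos_of_pos hM₁ r))
    (mul_lt_mul_of_pos_left (rpow_lt_rpow (le_of_lt hM₁) hlt hr) hb)

lemma tendsto_div_mul_rpow_nhdsGT_zero (ha : 0 < a) (hb : 0 < b) (hr : 0 < r) :
    Tendsto (fun M : ℝ => a / (b * M ^ r)) (𝓝[>] 0) atTop := by
  have hden : Tendsto (fun M : ℝ => b * M ^ r) (𝓝[>] 0) (𝓝[>] 0) := by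
    refine tendsto_nhdsWithin_iff.2 ⟨?_, eventually_nhdsWithin_of_forall fun _ hM =>
      mul_pos hb (rpow_pos_of_pos hM r)⟩
    simpa [zero_rpow hr.ne'] using
      ((continuousAt_rpow_const 0 r (Or.inr hr.le)).tendsto.const_mul b).mono_left
        nhdsWithin_le_nhds
  simpa [div_eq_mul_inv] using (tendsto_inv_nhdsGT_zero.comp hden).const_mul_atTop ha

lemma tendsto_div_mul_rpow_atTop (ha : 0 ≤ a) (hb : 0 < b) (hr : 0 < r) :
    Tendsto (fun M : ℝ => a / (b * M ^ r)) atTop (𝓝[≥] 0) :=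
  tendsto_nhdsWithin_iff.2 ⟨tendsto_const_nhds.div_atTop
      ((tendsto_rpow_atTop hr).const_mul_atTop hb),
    (eventually_gt_atTop 0).mono fun _ hM =>
      div_nonneg ha (mul_pos hb (rpow_pos_of_pos hM r)).le⟩

end PowerCoefficient

/-- The time-map `T(M)` of the positive phase is continuous and strictly
increasing on `(0,∞)`, with `T(0⁺) = 0` and `T(+∞) = π/γ_p`; in particular
`T(M) ∈ (0, π/γ_p)` for every `M > 0`. -/
theorem stmt13 (p γ lp : ℝ) (hp1 : 1 < p) (hp2 : p < 2)
    (hγ : γ = 2 / (2 - p)) (hlp : 0 < lp)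
    (T : ℝ → ℝ)
    (hT : ∀ M : ℝ, 0 < M → T M =
      2 * ∫ t in (0 : ℝ)..1,
        1 / Real.sqrt (γ ^ 2 * (1 - t ^ 2) + (2 * lp / (p * M ^ (2 - p))) * (1 - t ^ p))) :
    ContinuousOn T (Ioi 0) ∧ StrictMonoOn T (Ioi 0) ∧
    Tendsto T (nhdsWithin 0 (Ioi 0)) (nhds 0) ∧
    Tendsto T atTop (nhds (π / γ)) ∧
    ∀ M : ℝ, 0 < M → T M ∈ Ioo 0 (π / γ) := by
  have hp : 0 < p := by linarith
  have h2p : 0 < 2 - p := by linarith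
  have hγ₀ : 0 < γ := hγ ▸ div_pos two_pos h2p
  have h2lp : 0 < 2 * lp := by positivity
  have hTc : EqOn T (fun M => 2 * timeMapIntegral γ p (2 * lp / (p * M ^ (2 - p)))) (Ioi 0) :=
    hT
  have hc_pos : ∀ M : ℝ, 0 < M → 0 < 2 * lp / (p * M ^ (2 - p)) := fun M hM =>
    div_pos h2lp (mul_pos hp (rpow_pos_of_pos hM _))
  have hF₀ : 2 * timeMapIntegral γ p 0 = π / γ := by
    rw [timeMapIntegral.apply_zero hγ₀ hp]
    field_simp
  refine ⟨?_, fun M₁ hM₁ M₂ hM₂ hlt => ?_, ?_, ?_, fun M hM => ?_⟩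
  · exact (continuousOn_const.mul ((timeMapIntegral.continuousOn hγ₀ hp).comp
      (continuousOn_div_mul_rpow hp) fun M hM => (hc_pos M hM).le)).congr hTc
  · rw [hTc hM₁, hTc hM₂]
    exact mul_lt_mul_of_pos_left (timeMapIntegral.strictAntiOn hγ₀ hp (hc_pos M₂ hM₂).le
      (hc_pos M₁ hM₁).le (strictAntiOn_div_mul_rpow h2lp hp h2p hM₁ hM₂ hlt)) two_pos
  · refine Tendsto.congr' (eventuallyEq_nhdsWithin_of_eqOn hTc).symm ?_
    simpa using ((timeMapIntegral.tendsto_atTop hγ₀ hp).comp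
      (tendsto_div_mul_rpow_nhdsGT_zero h2lp hp h2p)).const_mul 2
  · refine Tendsto.congr' ((eventually_gt_atTop 0).mono fun M hM => (hTc hM).symm) ?_
    rw [← hF₀]
    exact ((timeMapIntegral.continuousOn hγ₀ hp 0 self_mem_Ici).tendsto.comp
      (tendsto_div_mul_rpow_atTop h2lp.le hp h2p)).const_mul 2
  · have hlt := timeMapIntegral.strictAntiOn hγ₀ hp self_mem_Ici (hc_pos M hM).le (hc_pos M hM)
    rw [hTc hM, ← hF₀]
    exact ⟨by linarith [timeMapIntegral.pos hγ₀ hp (hc_pos M hM).le], by linarith⟩
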